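/- arXiv:math/0001046 — 6 statements merged into one kernel-verified Lean document; each statement's English description precedes it below -/
import Mathlib

section
/- Define f_A(p,q) = (d + bγe^{q})p + ae^{-q} + b(αβ - γδ)e^{q} + cγ for A = aX+bY+cZ+dT, with γ ≠ 0 fixed. Then the standard Poisson bracket satisfies {f_A, f_B}(p,q) = f_{[A,B]}(p,q) for all A, B in the real diamond Lie algebra, where {u,v} = ∂_p u · ∂_q v - ∂_q u · ∂_p v. -/
/-- The standard Poisson bracket on ℝ²: {u,v} = ∂_p u · ∂_q v - ∂_q u · ∂_p v. -/
noncomputable def poisson (u v : ℝ × ℝ → ℝ) : ℝ × ℝ → ℝ :=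
  fun w =>
    deriv (fun p => u (p, w.2)) w.1 * deriv (fun q => v (w.1, q)) w.2
      - deriv (fun q => u (w.1, q)) w.2 * deriv (fun p => v (p, w.2)) w.1

/-- The Hamiltonian function of A = aX + bY + cZ + dT on the orbit Ω⁵:
f_A(p,q) = (d + bγe^{q})p + ae^{-q} + b(αβ - γδ)e^{q} + cγ. -/
noncomputable def fA5 (α β γ δ a b c d : ℝ) : ℝ × ℝ → ℝ :=
  fun w => (d + b * γ * Real.exp w.2) * w.1 + a * Real.exp (-w.2)
      + b * (α * β - γ * δ) * Real.exp w.2 + c * γ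

section

variable (α β γ δ a b c d : ℝ)

theorem hasDerivAt_fA5_fst (p q : ℝ) :
    HasDerivAt (fun p => fA5 α β γ δ a b c d (p, q)) (d + b * γ * Real.exp q) p := by
  refine HasDerivAt.congr_deriv
    (((((hasDerivAt_id p).const_mul (d + b * γ * Real.exp q)).add_const
      (a * Real.exp (-q))).add_const (b * (α * β - γ * δ) * Real.exp q)).add_const (c * γ)) ?_
  ring

theorem hasDerivAt_fA5_snd (p q : ℝ) :
    HasDerivAt (fun q => fA5 α β γ δ a b c d (p, q))
      (b * γ * Real.exp q * p - a * Real.exp (-q) + b * (α * β - γ * δ) * Real.exp q) q := by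
  have hexp := Real.hasDerivAt_exp q
  have hexp_neg := (hasDerivAt_neg q).exp
  refine HasDerivAt.congr_deriv ((((((hexp.const_mul (b * γ)).const_add d).mul_const p).add
    (hexp_neg.const_mul a)).add (hexp.const_mul (b * (α * β - γ * δ)))).add_const (c * γ)) ?_
  ring

end

theorem poisson_fA5_general (α β γ δ : ℝ)
    (a b c d a' b' c' d' : ℝ) :
    poisson (fA5 α β γ δ a b c d) (fA5 α β γ δ a' b' c' d')
      = fA5 α β γ δ (a * d' - d * a') (d * b' - d' * b) (a * b' - a' * b) 0 := by
  funext ⟨p, q⟩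
  rw [poisson]
  dsimp only
  rw [(hasDerivAt_fA5_fst α β γ δ a b c d p q).deriv,
    (hasDerivAt_fA5_fst α β γ δ a' b' c' d' p q).deriv,
    (hasDerivAt_fA5_snd α β γ δ a b c d p q).deriv,
    (hasDerivAt_fA5_snd α β γ δ a' b' c' d' p q).deriv]
  have hexp : Real.exp q * Real.exp (-q) = 1 := by
    rw [← Real.exp_add, add_neg_cancel, Real.exp_zero]
  simp only [fA5]
  -- the two sides differ by γ (ab' - a'b) (e^q e^{-q} - 1)
  linear_combination γ * (a * b' - a' * b) * hexp

/-- The assignment A ↦ f_A intertwines the diamond Lie algebra bracket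
[A,B] = (ad'-da')X + (db'-d'b)Y + (ab'-a'b)Z with the Poisson bracket:
{f_A, f_B} = f_{[A,B]}. -/
theorem poisson_fA5 (α β γ δ : ℝ) (hγ : γ ≠ 0)
    (a b c d a' b' c' d' : ℝ) :
    poisson (fA5 α β γ δ a b c d) (fA5 α β γ δ a' b' c' d')
      = fA5 α β γ δ (a * d' - d * a') (d * b' - d' * b) (a * b' - a' * b) 0 :=
  poisson_fA5_general α β γ δ a b c d a' b' c' d'
end

section
/- Define f_A(p,q) = dp + aαe^{-q} for A = aX+bY+cZ+dT with fixed α ≠ 0. Then {f_A, f_B} = f_{[A,B]} for all A, B in the real diamond Lie algebra, where {u,v} = ∂_p u ∂_q v - ∂_q u ∂_p v. -/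
/-- The Hamiltonian function of A = aX + bY + cZ + dT on the half-plane
orbit Ω²: f_A(p,q) = dp + aαe^{-q}. -/
noncomputable def fA2 (α a b c d : ℝ) : ℝ × ℝ → ℝ :=
  fun w => d * w.1 + a * α * Real.exp (-w.2)

open Real

theorem hasDerivAt_fA2_fst (α a b c d p q : ℝ) :
    HasDerivAt (fun p => fA2 α a b c d (p, q)) d p := by
  simpa [fA2] using ((hasDerivAt_id p).const_mul d).add_const (a * α * exp (-q))

theorem hasDerivAt_fA2_snd (α a b c d p q : ℝ) :
    HasDerivAt (fun q => fA2 α a b c d (p, q)) (-(a * α * exp (-q))) q := by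
  simpa [fA2] using ((hasDerivAt_neg q).exp.const_mul (a * α)).const_add (d * p)

theorem poisson_fA2_general (α : ℝ) (a b c d a' b' c' d' : ℝ) :
    poisson (fA2 α a b c d) (fA2 α a' b' c' d')
      = fA2 α (a * d' - d * a') (d * b' - d' * b) (a * b' - a' * b) 0 := by
  funext ⟨p, q⟩
  simp only [poisson, (hasDerivAt_fA2_fst ..).deriv, (hasDerivAt_fA2_snd ..).deriv]
  simp only [fA2]
  ring

/-- {f_A, f_B} = f_{[A,B]} on the half-plane orbit Ω², where
[A,B] = (ad'-da')X + (db'-d'b)Y + (ab'-a'b)Z. -/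
theorem poisson_fA2 (α : ℝ) (hα : α ≠ 0) (a b c d a' b' c' d' : ℝ) :
    poisson (fA2 α a b c d) (fA2 α a' b' c' d')
      = fA2 α (a * d' - d * a') (d * b' - d' * b) (a * b' - a' * b) 0 :=
  poisson_fA2_general α a b c d a' b' c' d'
end

section
/- Define f_A(p,q) = dp + aαe^{-q} + bβe^{q} for A = aX+bY+cZ+dT with fixed α, β ∈ ℝ. Then {f_A, f_B} = f_{[A,B]} for all A, B in the real diamond Lie algebra, with the standard Poisson bracket on ℝ². -/
/-- The Hamiltonian function of A = aX + bY + cZ + dT on the hyperbolic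
cylinder orbit Ω⁴: f_A(p,q) = dp + aαe^{-q} + bβe^{q}. -/
noncomputable def fA4 (α β a b c d : ℝ) : ℝ × ℝ → ℝ :=
  fun w => d * w.1 + a * α * Real.exp (-w.2) + b * β * Real.exp w.2

open Real

theorem poisson_linear_add (d d' : ℝ) (g g' : ℝ → ℝ) :
    poisson (fun w => d * w.1 + g w.2) (fun w => d' * w.1 + g' w.2)
      = fun w => d * deriv g' w.2 - deriv g w.2 * d' := by
  funext w
  simp only [poisson, deriv_add_const, deriv_const_mul_id', deriv_const_add]

noncomputable def cylinderPotential (α β a b : ℝ) (q : ℝ) : ℝ :=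
  a * α * exp (-q) + b * β * exp q

theorem fA4_eq_linear_add_cylinderPotential (α β a b c d : ℝ) :
    fA4 α β a b c d = fun w => d * w.1 + cylinderPotential α β a b w.2 := by
  funext w
  simp only [fA4, cylinderPotential, add_assoc]

theorem hasDerivAt_cylinderPotential (α β a b q : ℝ) :
    HasDerivAt (cylinderPotential α β a b) (-(a * α * exp (-q)) + b * β * exp q) q := by
  unfold cylinderPotential
  have hneg : HasDerivAt (fun q => exp (-q)) (-exp (-q)) q := by
    simpa using (hasDerivAt_neg q).exp
  exact ((hneg.const_mul (a * α)).add ((hasDerivAt_exp q).const_mul (b * β))).congr_deriv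
    (by ring)

theorem deriv_cylinderPotential (α β a b : ℝ) :
    deriv (cylinderPotential α β a b) = fun q => -(a * α * exp (-q)) + b * β * exp q :=
  funext fun q => (hasDerivAt_cylinderPotential α β a b q).deriv

/-- {f_A, f_B} = f_{[A,B]} on the hyperbolic cylinder orbit Ω⁴, where
[A,B] = (ad'-da')X + (db'-d'b)Y + (ab'-a'b)Z. -/
theorem poisson_fA4 (α β : ℝ) (a b c d a' b' c' d' : ℝ) :
    poisson (fA4 α β a b c d) (fA4 α β a' b' c' d')
      = fA4 α β (a * d' - d * a') (d * b' - d' * b) (a * b' - a' * b) 0 := by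
  rw [fA4_eq_linear_add_cylinderPotential, fA4_eq_linear_add_cylinderPotential,
    poisson_linear_add, deriv_cylinderPotential, deriv_cylinderPotential]
  funext w
  simp only [fA4]
  ring
end

section
/- For the Hamiltonian functions Ã(p,q) = (d + bγe^{q})p + ae^{-q} + b(αβ-γδ)e^{q} + cγ and the analogous B̃, the second Moyal bidifferential term equals P²(Ã,B̃) = -2bb'γ²e^{2q}, and P^k(Ã,B̃) = 0 for all k ≥ 3, where P^k(u,v) = Σ Λ^{i₁j₁}···Λ^{iₖjₖ} ∂^k u ∂^k v with Λ the standard symplectic 2-tensor on ℝ² (Λ^{12}=-1, Λ^{21}=1). -/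
/-- Partial derivative in direction p (i = 0) or q (i = 1) of a function on
ℝ² with coordinates x¹ = p, x² = q. -/
noncomputable def pd (i : Fin 2) (u : ℝ × ℝ → ℝ) : ℝ × ℝ → ℝ :=
  fun w => fderiv ℝ u w (if i = 0 then ((1 : ℝ), (0 : ℝ)) else ((0 : ℝ), (1 : ℝ)))

/-- Iterated partial derivative ∂^k_{i₁…iₖ}. -/
noncomputable def pdSeq {k : ℕ} (is : Fin k → Fin 2) (u : ℝ × ℝ → ℝ) : ℝ × ℝ → ℝ :=
  (List.ofFn is).foldr pd u

/-- The standard symplectic 2-tensor Λ on ℝ²: Λ^{12} = -1, Λ^{21} = 1. -/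
def Lam : Fin 2 → Fin 2 → ℝ :=
  fun i j => if i = 0 ∧ j = 1 then -1 else if i = 1 ∧ j = 0 then 1 else 0

/-- The k-th Moyal bidifferential operator
P^k(u,v) = Σ Λ^{i₁j₁}···Λ^{iₖjₖ} ∂^k_{i₁…iₖ}u · ∂^k_{j₁…jₖ}v. -/
noncomputable def moyalP (k : ℕ) (u v : ℝ × ℝ → ℝ) : ℝ × ℝ → ℝ :=
  fun w => ∑ is : Fin k → Fin 2, ∑ js : Fin k → Fin 2,
    (∏ r, Lam (is r) (js r)) * pdSeq is u w * pdSeq js v w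

/-!
Both Hamiltonians have the form `p f(q) + g(q)` with `f`, `g` smooth. A `p`-derivative turns such
a function into a function of `q` alone and a second one kills it, while `q`-derivatives preserve
both shapes. Since `Λ^{ij}` vanishes unless `i ≠ j`, the two multi-indices of a nonzero term of
`P^k` carry `k` derivatives in `p` between them, so for `k ≥ 3` one side carries two and the term
vanishes. For `k = 2` only the two mixed terms survive, each contributing `-f'(q) F'(q)`, and here
`f'(q) = bγe^q`.
-/

open scoped ContDiff

noncomputable def affineInP (f g : ℝ → ℝ) : ℝ × ℝ → ℝ := fun w => w.1 * f w.2 + g w.2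

section AffineInP

variable {f g : ℝ → ℝ}

theorem hasFDerivAt_affineInP (hf : Differentiable ℝ f) (hg : Differentiable ℝ g) (w : ℝ × ℝ) :
    HasFDerivAt (affineInP f g)
      (f w.2 • ContinuousLinearMap.fst ℝ ℝ ℝ +
        (w.1 * deriv f w.2 + deriv g w.2) • ContinuousLinearMap.snd ℝ ℝ ℝ) w := by
  have hsnd : HasFDerivAt Prod.snd (ContinuousLinearMap.snd ℝ ℝ ℝ) w := hasFDerivAt_snd
  have hf' := (hf w.2).hasDerivAt.comp_hasFDerivAt w hsnd
  have hg' := (hg w.2).hasDerivAt.comp_hasFDerivAt w hsnd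
  refine ((hasFDerivAt_fst.mul hf').add hg').congr_fderiv ?_
  ext <;> simp

theorem pd_zero_affineInP (hf : Differentiable ℝ f) (hg : Differentiable ℝ g) :
    pd 0 (affineInP f g) = affineInP 0 f := by
  funext w
  simp [pd, (hasFDerivAt_affineInP hf hg w).fderiv, affineInP]

theorem pd_one_affineInP (hf : Differentiable ℝ f) (hg : Differentiable ℝ g) :
    pd 1 (affineInP f g) = affineInP (deriv f) (deriv g) := by
  funext w
  simp [pd, (hasFDerivAt_affineInP hf hg w).fderiv, affineInP]

theorem affineInP_zero_zero : affineInP 0 0 = 0 := by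
  funext w
  simp [affineInP]

theorem foldr_pd_zero (L : List (Fin 2)) : L.foldr pd 0 = 0 := by
  induction L with
  | nil => rfl
  | cons i L ih =>
    funext w
    simp [ih, pd]

theorem pd_zero_pd_zero_affineInP (hf : Differentiable ℝ f) (hg : Differentiable ℝ g) :
    pd 0 (pd 0 (affineInP f g)) = 0 := by
  rw [pd_zero_affineInP hf hg, pd_zero_affineInP differentiable_zero hf, affineInP_zero_zero]

theorem pd_zero_pd_one_affineInP (hf : ContDiff ℝ 2 f) (hg : ContDiff ℝ 2 g) :
    pd 0 (pd 1 (affineInP f g)) = affineInP 0 (deriv f) := by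
  rw [pd_one_affineInP (hf.differentiable two_ne_zero) (hg.differentiable two_ne_zero),
    pd_zero_affineInP hf.differentiable_deriv_two hg.differentiable_deriv_two]

theorem pd_one_pd_zero_affineInP (hf : ContDiff ℝ 2 f) (hg : Differentiable ℝ g) :
    pd 1 (pd 0 (affineInP f g)) = affineInP 0 (deriv f) := by
  rw [pd_zero_affineInP (hf.differentiable two_ne_zero) hg,
    pd_one_affineInP differentiable_zero (hf.differentiable two_ne_zero), deriv_zero]

theorem foldr_pd_affineInP_zero_eq_zero (L : List (Fin 2)) (hL : 1 ≤ L.count 0)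
    (hg : ContDiff ℝ ∞ g) : L.foldr pd (affineInP 0 g) = 0 := by
  induction L using List.reverseRecOn generalizing g with
  | nil => simp at hL
  | append_singleton L i ih =>
    obtain ⟨hg₁, hg'⟩ := contDiff_infty_iff_deriv.mp hg
    -- `foldr` applies the last index first, so the induction peels off the list from the right.
    rw [List.foldr_append, List.foldr_cons, List.foldr_nil]
    match i with
    | 0 =>
      rw [pd_zero_affineInP differentiable_zero hg₁, affineInP_zero_zero, foldr_pd_zero]
    | 1 =>
      rw [pd_one_affineInP differentiable_zero hg₁, deriv_zero]
      exact ih (by simpa using hL) hg'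

theorem foldr_pd_affineInP_eq_zero (L : List (Fin 2)) (hL : 2 ≤ L.count 0)
    (hf : ContDiff ℝ ∞ f) (hg : ContDiff ℝ ∞ g) : L.foldr pd (affineInP f g) = 0 := by
  induction L using List.reverseRecOn generalizing f g with
  | nil => simp at hL
  | append_singleton L i ih =>
    obtain ⟨hf₁, hf'⟩ := contDiff_infty_iff_deriv.mp hf
    obtain ⟨hg₁, hg'⟩ := contDiff_infty_iff_deriv.mp hg
    rw [List.foldr_append, List.foldr_cons, List.foldr_nil]
    match i with
    | 0 =>
      rw [List.count_append, List.count_singleton_self] at hL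
      rw [pd_zero_affineInP hf₁ hg₁]
      exact foldr_pd_affineInP_zero_eq_zero L (by omega) hf
    | 1 =>
      rw [pd_one_affineInP hf₁ hg₁]
      exact ih (by simpa using hL) hf' hg'

end AffineInP

theorem count_zero_add_count_zero_ofFn {k : ℕ} (is js : Fin k → Fin 2) (h : ∀ r, js r ≠ is r) :
    (List.ofFn is).count 0 + (List.ofFn js).count 0 = k := by
  induction k with
  | zero => simp
  | succ k ih =>
    have htail := ih (fun r => is r.succ) (fun r => js r.succ) (fun r => h r.succ)
    have hhead := h 0
    rw [List.ofFn_succ, List.ofFn_succ, List.count_cons, List.count_cons]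
    revert hhead
    generalize is 0 = x
    generalize js 0 = y
    fin_cases x <;> fin_cases y <;> simp <;> omega

theorem Lam_self (i : Fin 2) : Lam i i = 0 := by
  fin_cases i <;> simp [Lam]

theorem Lam_zero_one : Lam 0 1 = -1 := rfl

theorem Lam_one_zero : Lam 1 0 = 1 := rfl

theorem pdSeq_two (x y : Fin 2) (u : ℝ × ℝ → ℝ) : pdSeq ![x, y] u = pd x (pd y u) := rfl

section MoyalAffineInP

variable {f g F G : ℝ → ℝ}

theorem moyalP_affineInP_eq_zero {k : ℕ} (hk : 3 ≤ k) (hf : ContDiff ℝ ∞ f)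
    (hg : ContDiff ℝ ∞ g) (hF : ContDiff ℝ ∞ F) (hG : ContDiff ℝ ∞ G) :
    moyalP k (affineInP f g) (affineInP F G) = 0 := by
  funext w
  refine Finset.sum_eq_zero fun is _ => Finset.sum_eq_zero fun js _ => ?_
  by_cases hdiag : ∃ r, js r = is r
  · obtain ⟨r, hr⟩ := hdiag
    rw [Finset.prod_eq_zero (Finset.mem_univ r) (by rw [hr, Lam_self]), zero_mul, zero_mul]
  · push Not at hdiag
    have hcount := count_zero_add_count_zero_ofFn is js hdiag
    rcases le_or_gt 2 ((List.ofFn is).count 0) with h2 | h2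
    · simp [pdSeq, foldr_pd_affineInP_eq_zero _ h2 hf hg]
    · simp [pdSeq, foldr_pd_affineInP_eq_zero (List.ofFn js) (by omega) hF hG]

theorem moyalP_two_affineInP (hf : ContDiff ℝ 2 f) (hg : ContDiff ℝ 2 g)
    (hF : ContDiff ℝ 2 F) (hG : ContDiff ℝ 2 G) :
    moyalP 2 (affineInP f g) (affineInP F G) = fun w => -2 * deriv f w.2 * deriv F w.2 := by
  funext w
  simp only [moyalP, ← (finTwoArrowEquiv (Fin 2)).symm.sum_comp, finTwoArrowEquiv_symm_apply,
    Fintype.sum_prod_type, Fin.sum_univ_two, Fin.prod_univ_two, pdSeq_two,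
    Matrix.cons_val_zero, Matrix.cons_val_one, Lam_self, Lam_zero_one, Lam_one_zero,
    pd_zero_pd_zero_affineInP (hf.differentiable two_ne_zero) (hg.differentiable two_ne_zero),
    pd_zero_pd_zero_affineInP (hF.differentiable two_ne_zero) (hG.differentiable two_ne_zero),
    pd_zero_pd_one_affineInP hf hg, pd_zero_pd_one_affineInP hF hG,
    pd_one_pd_zero_affineInP hf (hg.differentiable two_ne_zero),
    pd_one_pd_zero_affineInP hF (hG.differentiable two_ne_zero), affineInP, Pi.zero_apply]
  ring

end MoyalAffineInP

theorem fA5_eq_affineInP (α β γ δ a b c d : ℝ) :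
    fA5 α β γ δ a b c d = affineInP (fun q => d + b * γ * Real.exp q)
      (fun q => a * Real.exp (-q) + b * (α * β - γ * δ) * Real.exp q + c * γ) := by
  funext w
  simp only [fA5, affineInP]
  ring

theorem deriv_const_add_mul_exp (c d : ℝ) :
    deriv (fun q => d + c * Real.exp q) = fun q => c * Real.exp q :=
  funext fun q => (((Real.hasDerivAt_exp q).const_mul c).const_add d).deriv

theorem moyalP_fA5_general (α β γ δ : ℝ) (a b c d a' b' c' d' : ℝ) :
    (moyalP 2 (fA5 α β γ δ a b c d) (fA5 α β γ δ a' b' c' d')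
        = fun w => -2 * b * b' * γ ^ 2 * Real.exp (2 * w.2)) ∧
    (∀ k : ℕ, 3 ≤ k →
        moyalP k (fA5 α β γ δ a b c d) (fA5 α β γ δ a' b' c' d') = 0) := by
  have hslope {n : WithTop ℕ∞} (b d : ℝ) : ContDiff ℝ n fun q => d + b * γ * Real.exp q := by
    fun_prop
  have hintercept {n : WithTop ℕ∞} (a b c : ℝ) :
      ContDiff ℝ n fun q => a * Real.exp (-q) + b * (α * β - γ * δ) * Real.exp q + c * γ := by
    fun_prop
  simp only [fA5_eq_affineInP]
  refine ⟨?_, fun k hk => moyalP_affineInP_eq_zero hk (hslope b d) (hintercept a b c)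
    (hslope b' d') (hintercept a' b' c')⟩
  rw [moyalP_two_affineInP (hslope b d) (hintercept a b c) (hslope b' d') (hintercept a' b' c'),
    deriv_const_add_mul_exp, deriv_const_add_mul_exp]
  funext w
  rw [two_mul, Real.exp_add]
  ring

/-- For the Hamiltonian functions Ã, B̃ on Ω⁵, P²(Ã,B̃) = -2bb'γ²e^{2q}
and P^k(Ã,B̃) = 0 for all k ≥ 3. -/
theorem moyalP_fA5 (α β γ δ : ℝ) (hγ : γ ≠ 0) (a b c d a' b' c' d' : ℝ) :
    (moyalP 2 (fA5 α β γ δ a b c d) (fA5 α β γ δ a' b' c' d')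
        = fun w => -2 * b * b' * γ ^ 2 * Real.exp (2 * w.2)) ∧
    (∀ k : ℕ, 3 ≤ k →
        moyalP k (fA5 α β γ δ a b c d) (fA5 α β γ δ a' b' c' d') = 0) :=
  moyalP_fA5_general α β γ δ a b c d a' b' c' d'
end

section
/- The operators ℓ̂_A^{(4)} = d·∂_s + i(aα e^{-s} + bβ e^{s}) (multiplication), for A = aX+bY+cZ+dT, define a Lie algebra representation of the real diamond Lie algebra on smooth functions of s: the assignment is linear in A and ℓ̂_A∘ℓ̂_B - ℓ̂_B∘ℓ̂_A = ℓ̂_{[A,B]}. -/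
abbrev DiamondV : Type := ℝ × ℝ × ℝ × ℝ

def dX : DiamondV := (1, 0, 0, 0)
def dY : DiamondV := (0, 1, 0, 0)
def dZ : DiamondV := (0, 0, 1, 0)
def dT : DiamondV := (0, 0, 0, 1)

/-- The bracket of the real diamond Lie algebra in coordinates (a,b,c,d)
w.r.t. the basis X,Y,Z,T, determined by [X,Y]=Z, [T,X]=-X, [T,Y]=Y,
[Z,X]=[Z,Y]=[T,Z]=0. -/
def dbr (A B : DiamondV) : DiamondV :=
  (A.1 * B.2.2.2 - A.2.2.2 * B.1,
   A.2.2.2 * B.2.1 - B.2.2.2 * A.2.1,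
   A.1 * B.2.1 - B.1 * A.2.1,
   0)

/-- The operator ℓ̂_A^{(4)} = d·∂_s + i(aα e^{-s} + bβ e^{s}) (multiplication),
for A = aX + bY + cZ + dT, acting on complex functions of s ∈ ℝ. -/
noncomputable def ellHat4 (α β : ℝ) (A : DiamondV) (f : ℝ → ℂ) : ℝ → ℂ :=
  fun s => (A.2.2.2 : ℂ) * deriv f s
    + Complex.I * ((A.1 : ℂ) * (α : ℂ) * Complex.exp (-(s : ℂ))
        + (A.2.1 : ℂ) * (β : ℂ) * Complex.exp (s : ℂ)) * f s

lemma expNeg_hasDerivAt (s : ℝ) :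
    HasDerivAt (fun s : ℝ => Complex.exp (-(s : ℂ))) (-Complex.exp (-(s : ℂ))) s := by
  have h : HasDerivAt (fun z : ℂ => Complex.exp (-z)) (-Complex.exp (-(s:ℂ))) (s:ℂ) := by
    have h0 := (Complex.hasDerivAt_exp (-(s:ℂ))).comp (s:ℂ) ((hasDerivAt_id (s:ℂ)).neg)
    simp only [mul_neg, mul_one, id] at h0
    exact h0
  exact h.comp_ofReal

lemma expPos_hasDerivAt (s : ℝ) :
    HasDerivAt (fun s : ℝ => Complex.exp (s : ℂ)) (Complex.exp (s : ℂ)) s :=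
  (Complex.hasDerivAt_exp (s:ℂ)).comp_ofReal

lemma ellHat4_hasDerivAt (α β : ℝ) (B : DiamondV) (f : ℝ → ℂ)
    (hf : ContDiff ℝ (⊤ : ℕ∞) f) (s : ℝ) :
    HasDerivAt (ellHat4 α β B f)
      ((B.2.2.2 : ℂ) * deriv (deriv f) s
        + Complex.I * (-((B.1 : ℂ) * (α : ℂ)) * Complex.exp (-(s : ℂ))
            + (B.2.1 : ℂ) * (β : ℂ) * Complex.exp (s : ℂ)) * f s
        + Complex.I * ((B.1 : ℂ) * (α : ℂ) * Complex.exp (-(s : ℂ))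
            + (B.2.1 : ℂ) * (β : ℂ) * Complex.exp (s : ℂ)) * deriv f s) s := by
  have hf' : ContDiff ℝ ((⊤ : ℕ∞) : WithTop ℕ∞) f := hf.of_le (by simp)
  have hf1 : Differentiable ℝ f := (contDiff_infty_iff_deriv.mp hf').1
  have hf2 : ContDiff ℝ ((⊤ : ℕ∞) : WithTop ℕ∞) (deriv f) := (contDiff_infty_iff_deriv.mp hf').2
  have hf2d : Differentiable ℝ (deriv f) := (contDiff_infty_iff_deriv.mp hf2).1
  have hD : HasDerivAt f (deriv f s) s := (hf1 s).hasDerivAt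
  have hD2 : HasDerivAt (deriv f) (deriv (deriv f) s) s := (hf2d s).hasDerivAt
  have h1 : HasDerivAt (fun s => (B.2.2.2 : ℂ) * deriv f s)
      ((B.2.2.2 : ℂ) * deriv (deriv f) s) s := hD2.const_mul _
  have hm : HasDerivAt (fun s : ℝ => Complex.I * ((B.1 : ℂ) * (α : ℂ) * Complex.exp (-(s : ℂ))
        + (B.2.1 : ℂ) * (β : ℂ) * Complex.exp (s : ℂ)))
      (Complex.I * ((B.1 : ℂ) * (α : ℂ) * (-Complex.exp (-(s : ℂ)))
        + (B.2.1 : ℂ) * (β : ℂ) * Complex.exp (s : ℂ))) s :=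
    (((expNeg_hasDerivAt s).const_mul _).add ((expPos_hasDerivAt s).const_mul _)).const_mul _
  have h2 := hm.mul hD
  have := h1.add h2
  convert this using 1
  · rfl
  · rfl
  · ring

/-- A ↦ ℓ̂_A^{(4)} is a Lie algebra representation of the real diamond Lie
algebra on smooth functions of s: linear in A and
ℓ̂_A∘ℓ̂_B - ℓ̂_B∘ℓ̂_A = ℓ̂_{[A,B]}. -/
theorem ellHat4_representation (α β : ℝ) (hα : α ≠ 0) (hβ : β ≠ 0) :
    (∀ (μ ν : ℝ) (A B : DiamondV) (f : ℝ → ℂ), ContDiff ℝ (⊤ : ℕ∞) f →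
        ellHat4 α β (μ • A + ν • B) f
          = μ • ellHat4 α β A f + ν • ellHat4 α β B f) ∧
    (∀ (A B : DiamondV) (f : ℝ → ℂ), ContDiff ℝ (⊤ : ℕ∞) f →
        ellHat4 α β A (ellHat4 α β B f) - ellHat4 α β B (ellHat4 α β A f)
          = ellHat4 α β (dbr A B) f) := by
  constructor
  · intro μ ν A B f hf
    funext s
    simp only [ellHat4, Pi.add_apply, Pi.smul_apply, Prod.fst_add, Prod.snd_add,
      Prod.smul_fst, Prod.smul_snd, smul_eq_mul, Complex.real_smul]
    push_cast
    ring
  · intro A B f hf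
    funext s
    have hdB := (ellHat4_hasDerivAt α β B f hf s).deriv
    have hdA := (ellHat4_hasDerivAt α β A f hf s).deriv
    have e1 : ellHat4 α β A (ellHat4 α β B f) s
        = (A.2.2.2 : ℂ) * deriv (ellHat4 α β B f) s
          + Complex.I * ((A.1 : ℂ) * (α : ℂ) * Complex.exp (-(s : ℂ))
              + (A.2.1 : ℂ) * (β : ℂ) * Complex.exp (s : ℂ)) * (ellHat4 α β B f s) := rfl
    have e2 : ellHat4 α β B (ellHat4 α β A f) s
        = (B.2.2.2 : ℂ) * deriv (ellHat4 α β A f) s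
          + Complex.I * ((B.1 : ℂ) * (α : ℂ) * Complex.exp (-(s : ℂ))
              + (B.2.1 : ℂ) * (β : ℂ) * Complex.exp (s : ℂ)) * (ellHat4 α β A f s) := rfl
    rw [Pi.sub_apply, e1, e2, hdA, hdB]
    simp only [ellHat4, dbr]
    push_cast
    ring
end

section
/- The operators ℓ̂_A^{(5)} = (d + bγe^{s})∂_s + i[ae^{-s} + b(αβ-γδ)e^{s} + cγ], for A = aX+bY+cZ+dT, define a Lie algebra representation of the real diamond Lie algebra on smooth complex-valued functions of s ∈ ℝ: the assignment A ↦ ℓ̂_A^{(5)} is linear and satisfies ℓ̂_A∘ℓ̂_B - ℓ̂_B∘ℓ̂_A = ℓ̂_{[A,B]}. -/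
/-- The operator ℓ̂_A^{(5)} = (d + bγe^{s})∂_s + i[ae^{-s} + b(αβ-γδ)e^{s} + cγ]
(multiplication), for A = aX + bY + cZ + dT, acting on complex functions of s. -/
noncomputable def ellHat5 (α β γ δ : ℝ) (A : DiamondV) (f : ℝ → ℂ) : ℝ → ℂ :=
  fun s => ((A.2.2.2 : ℂ) + (A.2.1 : ℂ) * (γ : ℂ) * Complex.exp (s : ℂ)) * deriv f s
    + Complex.I * ((A.1 : ℂ) * Complex.exp (-(s : ℂ))
        + (A.2.1 : ℂ) * ((α * β - γ * δ : ℝ) : ℂ) * Complex.exp (s : ℂ)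
        + (A.2.2.1 : ℂ) * (γ : ℂ)) * f s



lemma ell_hasDerivAt (α β γ δ : ℝ) (A : ℝ × ℝ × ℝ × ℝ) (f : ℝ → ℂ)
    (hf : ContDiff ℝ (⊤ : ℕ∞) f) (s : ℝ) :
    HasDerivAt (ellHat5 α β γ δ A f)
      ((A.2.1:ℂ)*(γ:ℂ)*Complex.exp (s:ℂ) * deriv f s
        + ((A.2.2.2:ℂ) + (A.2.1:ℂ)*(γ:ℂ)*Complex.exp (s:ℂ)) * deriv (deriv f) s
        + Complex.I * (-((A.1:ℂ)*Complex.exp (-(s:ℂ)))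
            + (A.2.1:ℂ)*((α*β-γ*δ:ℝ):ℂ)*Complex.exp (s:ℂ)) * f s
        + Complex.I * ((A.1:ℂ)*Complex.exp (-(s:ℂ))
            + (A.2.1:ℂ)*((α*β-γ*δ:ℝ):ℂ)*Complex.exp (s:ℂ)
            + (A.2.2.1:ℂ)*(γ:ℂ)) * deriv f s) s := by
  have hf' : ContDiff ℝ ((⊤:ℕ∞):WithTop ℕ∞) f := hf.of_le (by simp)
  have hdf : ContDiff ℝ ((⊤:ℕ∞):WithTop ℕ∞) (deriv f) := (contDiff_infty_iff_deriv.mp hf').2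
  have h1 : HasDerivAt (deriv f) (deriv (deriv f) s) s :=
    ((contDiff_infty_iff_deriv.mp hdf).1 s).hasDerivAt
  have h0 : HasDerivAt f (deriv f s) s := ((contDiff_infty_iff_deriv.mp hf').1 s).hasDerivAt
  have he : HasDerivAt (fun t : ℝ => Complex.exp (t:ℂ)) (Complex.exp (s:ℂ)) s :=
    (Complex.hasDerivAt_exp (s:ℂ)).comp_ofReal
  have hen : HasDerivAt (fun t : ℝ => Complex.exp (-(t:ℂ))) (-Complex.exp (-(s:ℂ))) s := by
    have := ((Complex.hasDerivAt_exp (-(s:ℂ))).comp (s:ℂ)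
      ((hasDerivAt_id (s:ℂ)).neg)).comp_ofReal
    simpa using this
  have hA : HasDerivAt (fun t : ℝ =>
      ((A.2.2.2 : ℂ) + (A.2.1 : ℂ) * (γ : ℂ) * Complex.exp (t : ℂ)) * deriv f t)
      ((A.2.1:ℂ)*(γ:ℂ)*Complex.exp (s:ℂ) * deriv f s
        + ((A.2.2.2:ℂ) + (A.2.1:ℂ)*(γ:ℂ)*Complex.exp (s:ℂ)) * deriv (deriv f) s) s := by
    have := ((hasDerivAt_const s ((A.2.2.2:ℂ))).add
      ((he.const_mul ((A.2.1:ℂ)*(γ:ℂ))))).mul h1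
    convert this using 1
    · rfl
    · rfl
    · simp only [Pi.add_apply]; ring
  have hB : HasDerivAt (fun t : ℝ =>
      Complex.I * ((A.1 : ℂ) * Complex.exp (-(t : ℂ))
        + (A.2.1 : ℂ) * ((α * β - γ * δ : ℝ) : ℂ) * Complex.exp (t : ℂ)
        + (A.2.2.1 : ℂ) * (γ : ℂ)) * f t)
      (Complex.I * (-((A.1:ℂ)*Complex.exp (-(s:ℂ)))
            + (A.2.1:ℂ)*((α*β-γ*δ:ℝ):ℂ)*Complex.exp (s:ℂ)) * f s
        + Complex.I * ((A.1:ℂ)*Complex.exp (-(s:ℂ))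
            + (A.2.1:ℂ)*((α*β-γ*δ:ℝ):ℂ)*Complex.exp (s:ℂ)
            + (A.2.2.1:ℂ)*(γ:ℂ)) * deriv f s) s := by
    have := ((((hen.const_mul ((A.1:ℂ))).add
        (he.const_mul ((A.2.1:ℂ)*((α*β-γ*δ:ℝ):ℂ)))).add
        (hasDerivAt_const s ((A.2.2.1:ℂ)*(γ:ℂ)))).const_mul Complex.I).mul h0
    convert this using 1
    · rfl
    · rfl
    · simp only [Pi.add_apply]; ring
  have := hA.add hB
  convert this using 1
  · rfl
  · rfl
  · ring

/-- A ↦ ℓ̂_A^{(5)} is a Lie algebra representation of the real diamond Lie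
algebra on smooth complex functions of s ∈ ℝ: linear in A and
ℓ̂_A∘ℓ̂_B - ℓ̂_B∘ℓ̂_A = ℓ̂_{[A,B]}. -/
theorem ellHat5_representation (α β γ δ : ℝ) (hγ : γ ≠ 0) :
    (∀ (μ ν : ℝ) (A B : DiamondV) (f : ℝ → ℂ), ContDiff ℝ (⊤ : ℕ∞) f →
        ellHat5 α β γ δ (μ • A + ν • B) f
          = μ • ellHat5 α β γ δ A f + ν • ellHat5 α β γ δ B f) ∧
    (∀ (A B : DiamondV) (f : ℝ → ℂ), ContDiff ℝ (⊤ : ℕ∞) f →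
        ellHat5 α β γ δ A (ellHat5 α β γ δ B f)
            - ellHat5 α β γ δ B (ellHat5 α β γ δ A f)
          = ellHat5 α β γ δ (dbr A B) f) := by

  have key := ell_hasDerivAt
  constructor
  · intro μ ν A B f hf
    obtain ⟨a1,b1,c1,d1⟩ := A
    obtain ⟨a2,b2,c2,d2⟩ := B
    funext s
    simp only [ellHat5, Prod.smul_mk, Prod.mk_add_mk, smul_eq_mul, Pi.add_apply,
      Pi.smul_apply, Complex.real_smul]
    push_cast
    ring
  · intro A B f hf
    funext s
    have hdB := (ell_hasDerivAt α β γ δ B f hf s).deriv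
    have hdA := (ell_hasDerivAt α β γ δ A f hf s).deriv
    simp only [Pi.sub_apply, ellHat5, dbr]
    rw [hdB, hdA]
    push_cast
    rw [Complex.exp_neg]
    have hE := Complex.exp_ne_zero (s:ℂ)
    field_simp
    ring
end
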